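/- Redundant frames (case without breaks): let E range over contexts that are either a break-catching frame ⟦·⟧_brk or a scoped block {·}_{L_i}^{N''}, let E_m[..E_1[·]..] be a nesting of such contexts containing no ⟦·⟧_brk, with local stores satisfying dom(L₁) ⊆ dom(L₂) ⊆ .. ⊆ dom(L_n). Then ⟨E₁'[{S}_{L₁}^{N''}] | G; L; N⟩ →* ⟨𝕄 | G'; L'; N'⟩ if and only if ⟨E_m[..E₁[{S}_{L₁}^{N''}]..] | G; L; N⟩ →* ⟨𝕄 | G'; L'; N'⟩, i.e., nested block frames with ascending domains can be collapsed into a single block frame without changing the observable result. -/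
import Mathlib


namespace Yul

abbrev Var := String

/-- Yul operational syntax: source-level statements and expressions merged with
    runtime constructs (modes, scoped blocks, break/continue frames, call frames, tuples). -/
inductive Term (Val Op Ext : Type) : Type where
  | block (ss : List (Term Val Op Ext))
  | fundef (f : Var) (ps rs : List Var) (body : Term Val Op Ext)
  | letdecl (xs : List Var) (e : Term Val Op Ext)
  | assign (xs : List Var) (e : Term Val Op Ext)
  | ite (cond : Term Val Op Ext) (body : Term Val Op Ext)
  | switch (scrut : Term Val Op Ext) (cases : List (Val × Term Val Op Ext))
      (dflt : Term Val Op Ext)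
  | forloop (init cond post body : Term Val Op Ext)
  | brk
  | cont
  | leave
  | call (f : Var) (args : List (Term Val Op Ext))
  | opcall (op : Op) (args : List (Term Val Op Ext))
  | var (x : Var)
  | val (v : Val)
  | regular
  | ext (m : Ext)
  | tuple (vs : List Val)
  | scopedBlock (ss : List (Term Val Op Ext)) (Lsave : Var → Option Val)
      (Nsave : Var → Option (List Var × List Var × Term Val Op Ext))
  | brkFrame (s : Term Val Op Ext)
  | cntFrame (s : Term Val Op Ext)
  | callFrame (s : Term Val Op Ext) (Lsave : Var → Option Val) (rets : List Var)

/-- Local variable stores. -/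
abbrev Store (Val : Type) := Var → Option Val

/-- Function namespaces. -/
abbrev NS (Val Op Ext : Type) := Var → Option (List Var × List Var × Term Val Op Ext)

variable {Val Op Ext Gl : Type}

def Dom (L : Store Val) : Set Var := {x | (L x).isSome}

/-- `restrict L1 L` is `L1 ↾ L` : restriction of `L1` to the domain of `L`. -/
def restrict (L1 L : Store Val) : Store Val :=
  fun x => if (L x).isSome then L1 x else none

def updStore (L : Store Val) (x : Var) (v : Val) : Store Val :=
  fun y => if y = x then some v else L y

def updMany (L : Store Val) (xs : List Var) (vs : List Val) : Store Val :=
  (List.zip xs vs).foldl (fun L p => updStore L p.1 p.2) L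

def emptyStore : Store Val := fun _ => none

def updNS (N : NS Val Op Ext) (f : Var)
    (d : List Var × List Var × Term Val Op Ext) : NS Val Op Ext :=
  fun y => if y = f then some d else N y

/-- `funsof`: extend the namespace with the functions defined at the top level of a block. -/
def extendFuns (ss : List (Term Val Op Ext)) (N : NS Val Op Ext) : NS Val Op Ext :=
  ss.foldl (fun N s =>
    match s with
    | .fundef f ps rs body => updNS N f (ps, rs, body)
    | _ => N) N

/-- Return-value packaging: `⟨⟩ = regular`, `⟨v⟩ = v`, `⟨v⃗⟩` a tuple for more values. -/
def mkRet (vs : List Val) : Term Val Op Ext :=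
  match vs with
  | [] => .regular
  | [v] => .val v
  | vs => .tuple vs

/-- A Yul dialect: truth/falsehood of values, the default value, and the
    (possibly failing) opcode evaluation relation `⇓_opc`. -/
structure Dialect (Val Op Ext Gl : Type) where
  isTrue : Val → Prop
  isFalse : Val → Prop
  zero : Val
  opc : Op → List Val → Gl → (List Val ⊕ Ext) → Gl → Prop

def IsIrregularCore (t : Term Val Op Ext) : Prop :=
  t = .brk ∨ t = .cont ∨ t = .leave

/-- The modes `regular`, `break`, `continue`, `leave`. -/
def IsModeCore (t : Term Val Op Ext) : Prop :=
  t = .regular ∨ t = .brk ∨ t = .cont ∨ t = .leave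

/-- All modes, including external irregular modes ℳ. -/
def IsMode (t : Term Val Op Ext) : Prop :=
  IsModeCore t ∨ ∃ m, t = .ext m

/-- Results of completed expressions/calls: a value, a tuple, or `regular`. -/
def IsRet (t : Term Val Op Ext) : Prop :=
  (∃ v, t = .val v) ∨ (∃ vs, t = .tuple vs) ∨ t = .regular

/-- `S_ret ::= v | ⟨v⃗⟩ | 𝕄`. -/
def IsRetAny (t : Term Val Op Ext) : Prop := IsRet t ∨ IsModeCore t

/-- Evaluation contexts. -/
inductive Ctx (Val Op Ext : Type) : Type where
  | hole
  | scopedC (E : Ctx Val Op Ext) (rest : List (Term Val Op Ext)) (L : Store Val)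
      (N : NS Val Op Ext)
  | letC (xs : List Var) (E : Ctx Val Op Ext)
  | assignC (xs : List Var) (E : Ctx Val Op Ext)
  | cntC (E : Ctx Val Op Ext)
  | brkC (E : Ctx Val Op Ext)
  | iteC (E : Ctx Val Op Ext) (body : Term Val Op Ext)
  | switchC (E : Ctx Val Op Ext) (cases : List (Val × Term Val Op Ext))
      (dflt : Term Val Op Ext)
  | callC (f : Var) (before : List (Term Val Op Ext)) (E : Ctx Val Op Ext)
      (after : List Val)
  | opcallC (op : Op) (before : List (Term Val Op Ext)) (E : Ctx Val Op Ext)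
      (after : List Val)
  | frameC (E : Ctx Val Op Ext) (L : Store Val) (rets : List Var)

def plug (E : Ctx Val Op Ext) (t : Term Val Op Ext) : Term Val Op Ext :=
  match E with
  | .hole => t
  | .scopedC E rest L N => .scopedBlock (plug E t :: rest) L N
  | .letC xs E => .letdecl xs (plug E t)
  | .assignC xs E => .assign xs (plug E t)
  | .cntC E => .cntFrame (plug E t)
  | .brkC E => .brkFrame (plug E t)
  | .iteC E body => .ite (plug E t) body
  | .switchC E cs d => .switch (plug E t) cs d
  | .callC f before E after => .call f (before ++ plug E t :: after.map Term.val)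
  | .opcallC op before E after => .opcall op (before ++ plug E t :: after.map Term.val)
  | .frameC E L rets => .callFrame (plug E t) L rets

/-- Base small-step reduction rules of Yul. -/
inductive Base (D : Dialect Val Op Ext Gl) :
    Term Val Op Ext → Gl → Store Val → NS Val Op Ext →
    Term Val Op Ext → Gl → Store Val → NS Val Op Ext → Prop where
  | blockEnter (ss G L N) (h : ss ≠ []) :
      Base D (.block ss) G L N (.scopedBlock ss L N) G L (extendFuns ss N)
  | blockEmpty (G L N) :
      Base D (.block []) G L N .regular G L N
  | scopedNext (ss L0 N0 G L N) (h : ss ≠ []) :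
      Base D (.scopedBlock (.regular :: ss) L0 N0) G L N (.scopedBlock ss L0 N0) G L N
  | scopedExitReg (L0 N0 G L N) :
      Base D (.scopedBlock [.regular] L0 N0) G L N .regular G (restrict L L0) N0
  | scopedExitIrr (m ss L0 N0 G L N) (h : IsIrregularCore m) :
      Base D (.scopedBlock (m :: ss) L0 N0) G L N m G (restrict L L0) N0
  | fundefSkip (f ps rs body G L N) :
      Base D (.fundef f ps rs body) G L N .regular G L N
  | letSingle (x v G L N) (h : L x = none) :
      Base D (.letdecl [x] (.val v)) G L N .regular G (updStore L x v) N
  | letTuple (xs vs G L N) (hlen : xs.length = vs.length)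
      (hfresh : ∀ x ∈ xs, L x = none) :
      Base D (.letdecl xs (.tuple vs)) G L N .regular G (updMany L xs vs) N
  | assignSingle (x v G L N) (h : (L x).isSome) :
      Base D (.assign [x] (.val v)) G L N .regular G (updStore L x v) N
  | assignTuple (xs vs G L N) (hlen : xs.length = vs.length)
      (hdom : ∀ x ∈ xs, (L x).isSome) :
      Base D (.assign xs (.tuple vs)) G L N .regular G (updMany L xs vs) N
  | iteFalse (v body G L N) (h : D.isFalse v) :
      Base D (.ite (.val v) body) G L N .regular G L N
  | iteTrue (v body G L N) (h : D.isTrue v) :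
      Base D (.ite (.val v) body) G L N body G L N
  | switchDefault (v cs d G L N) (h : ∀ c ∈ cs, c.1 ≠ v) :
      Base D (.switch (.val v) cs d) G L N d G L N
  | switchCase (c body pre post d G L N) (h : ∀ p ∈ pre, p.1 ≠ c) :
      Base D (.switch (.val c) (pre ++ (c, body) :: post) d) G L N body G L N
  | forInit (ss M Sp Sb G L N) (h : ss ≠ []) :
      Base D (.forloop (.block ss) M Sp Sb) G L N
        (.block (ss ++ [.forloop (.block []) M Sp Sb])) G L N
  | forUnfold (M Sp Sb G L N) :
      Base D (.forloop (.block []) M Sp Sb) G L N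
        (.brkFrame (.ite M
          (.block [.cntFrame Sb, Sp, .forloop (.block []) M Sp Sb]))) G L N
  | cntPass (m G L N) (h : m = .regular ∨ m = .brk ∨ m = .leave) :
      Base D (.cntFrame m) G L N m G L N
  | cntCatch (G L N) :
      Base D (.cntFrame .cont) G L N .regular G L N
  | brkPass (m G L N) (h : m = .regular ∨ m = .leave) :
      Base D (.brkFrame m) G L N m G L N
  | brkCatch (G L N) :
      Base D (.brkFrame .brk) G L N .regular G L N
  | varLookup (x v G L N) (h : L x = some v) :
      Base D (.var x) G L N (.val v) G L N
  | callEnter (f vs ps rs body G L N) (hN : N f = some (ps, rs, body))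
      (hlen : ps.length = vs.length) :
      Base D (.call f (vs.map Term.val)) G L N
        (.callFrame body L rs) G
        (updMany (updMany emptyStore rs (rs.map fun _ => D.zero)) ps vs) N
  | frameExit (m Lsave rs ws G L N) (hm : m = .leave ∨ m = .regular)
      (hws : List.Forall₂ (fun z w => L z = some w) rs ws) :
      Base D (.callFrame m Lsave rs) G L N (mkRet ws) G Lsave N
  | opcallOk (op vs ws G G' L N) (h : D.opc op vs G (Sum.inl ws) G') :
      Base D (.opcall op (vs.map Term.val)) G L N (mkRet ws) G' L N
  | opcallErr (op vs m G G' L N) (h : D.opc op vs G (Sum.inr m) G') :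
      Base D (.opcall op (vs.map Term.val)) G L N (.ext m) G' L N

/-- Configurations `⟨S | G; L; N⟩`. -/
abbrev Config (Val Op Ext Gl : Type) :=
  Term Val Op Ext × Gl × Store Val × NS Val Op Ext

/-- The small-step relation: base rules closed under evaluation contexts,
    plus the top-level propagation of external irregular modes. -/
inductive Step (D : Dialect Val Op Ext Gl) :
    Config Val Op Ext Gl → Config Val Op Ext Gl → Prop where
  | ctx (E S G L N S' G' L' N') (h : Base D S G L N S' G' L' N') :
      Step D (plug E S, G, L, N) (plug E S', G', L', N')
  | extProp (E m G L N) (h : E ≠ Ctx.hole) :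
      Step D (plug E (.ext m), G, L, N) (.ext m, G, L, N)

/-- Zero or more small steps. -/
abbrev Steps (D : Dialect Val Op Ext Gl) :
    Config Val Op Ext Gl → Config Val Op Ext Gl → Prop :=
  Relation.ReflTransGen (Step D)

mutual
/-- Big-step evaluation of statements `⟨S | G; L; N⟩ ⇓ ⟨𝕄 | G'; L'; N'⟩`. -/
inductive Big (D : Dialect Val Op Ext Gl) :
    Term Val Op Ext → Gl → Store Val → NS Val Op Ext →
    Term Val Op Ext → Gl → Store Val → NS Val Op Ext → Prop where
  | blockB {ss M G L N G1 L1}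
      (h : BigSeq D ss G L (extendFuns ss N) M G1 L1 (extendFuns ss N)) :
      Big D (.block ss) G L N M G1 (restrict L1 L) N
  | fundefB {f ps rs body G L N} :
      Big D (.fundef f ps rs body) G L N .regular G L N
  | brkB {G L N} : Big D .brk G L N .brk G L N
  | contB {G L N} : Big D .cont G L N .cont G L N
  | leaveB {G L N} : Big D .leave G L N .leave G L N
  | letSingleB {x e v G L N G1 L1}
      (h1 : BigExp D e G L N (.val v) G1 L1 N) (h2 : L x = none) :
      Big D (.letdecl [x] e) G L N .regular G1 (updStore L1 x v) N
  | letTupleB {xs e vs G L N G1 L1}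
      (h1 : BigExp D e G L N (.tuple vs) G1 L1 N)
      (hlen : xs.length = vs.length) (hfresh : ∀ x ∈ xs, L x = none) :
      Big D (.letdecl xs e) G L N .regular G1 (updMany L1 xs vs) N
  | assignSingleB {x e v G L N G1 L1}
      (h1 : BigExp D e G L N (.val v) G1 L1 N) (h2 : (L x).isSome) :
      Big D (.assign [x] e) G L N .regular G1 (updStore L1 x v) N
  | assignTupleB {xs e vs G L N G1 L1}
      (h1 : BigExp D e G L N (.tuple vs) G1 L1 N)
      (hlen : xs.length = vs.length) (hdom : ∀ x ∈ xs, (L x).isSome) :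
      Big D (.assign xs e) G L N .regular G1 (updMany L1 xs vs) N
  | exprB {M G L N G' L'}
      (h : BigExp D M G L N .regular G' L' N) :
      Big D M G L N .regular G' L' N
  | ifF {M body v G L N G0 L0}
      (h1 : BigExp D M G L N (.val v) G0 L0 N) (h2 : D.isFalse v) :
      Big D (.ite M body) G L N .regular G0 L0 N
  | ifT {M body v MM G L N G0 L0 G1 L1}
      (h1 : BigExp D M G L N (.val v) G0 L0 N) (h2 : D.isTrue v)
      (h3 : Big D body G0 L0 N MM G1 L1 N) :
      Big D (.ite M body) G L N MM G1 L1 N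
  | swD {M cs d v MM G L N G0 L0 G1 L1}
      (h1 : BigExp D M G L N (.val v) G0 L0 N)
      (h2 : ∀ c ∈ cs, c.1 ≠ v)
      (h3 : Big D d G0 L0 N MM G1 L1 N) :
      Big D (.switch M cs d) G L N MM G1 L1 N
  | swC {M pre c body post d MM G L N G0 L0 G1 L1}
      (h1 : BigExp D M G L N (.val c) G0 L0 N)
      (hpre : ∀ p ∈ pre, p.1 ≠ c)
      (h3 : Big D body G0 L0 N MM G1 L1 N) :
      Big D (.switch M (pre ++ (c, body) :: post) d) G L N MM G1 L1 N
  | forInitB {ss M Sp Sb MM G L N G2 L2} (hne : ss ≠ [])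
      (h : Big D (.block (ss ++ [.forloop (.block []) M Sp Sb])) G L N MM G2 L2 N) :
      Big D (.forloop (.block ss) M Sp Sb) G L N MM G2 L2 N
  | forFalseB {M Sp Sb v G L N G1 L1}
      (h1 : BigExp D M G L N (.val v) G1 L1 N) (h2 : D.isFalse v) :
      Big D (.forloop (.block []) M Sp Sb) G L N .regular G1 L1 N
  | forHalt1B {M Sp Sb v Mlb Mout G L N G1 L1 G2 L2}
      (h1 : BigExp D M G L N (.val v) G1 L1 N) (h2 : D.isTrue v)
      (h3 : Big D Sb G1 L1 N Mlb G2 L2 N)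
      (h4 : (Mlb = .leave ∧ Mout = .leave) ∨ (Mlb = .brk ∧ Mout = .regular)) :
      Big D (.forloop (.block []) M Sp Sb) G L N Mout G2 L2 N
  | forHalt2B {M Sp Sb v MM G L N G1 L1 G2 L2 G3 L3}
      (h1 : BigExp D M G L N (.val v) G1 L1 N) (h2 : D.isTrue v)
      (h3 : Big D Sb G1 L1 N MM G2 L2 N)
      (h4 : MM = .regular ∨ MM = .cont)
      (h5 : Big D Sp G2 L2 N .leave G3 L3 N) :
      Big D (.forloop (.block []) M Sp Sb) G L N .leave G3 L3 N
  | forLoopB {M Sp Sb v MM MM' G L N G1 L1 G2 L2 G3 L3 G4 L4}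
      (h1 : BigExp D M G L N (.val v) G1 L1 N) (h2 : D.isTrue v)
      (h3 : Big D Sb G1 L1 N MM G2 L2 N)
      (h4 : MM = .regular ∨ MM = .cont)
      (h5 : Big D Sp G2 L2 N .regular G3 L3 N)
      (h6 : Big D (.forloop (.block []) M Sp Sb) G3 L3 N MM' G4 L4 N) :
      Big D (.forloop (.block []) M Sp Sb) G L N MM' G4 L4 N

/-- Big-step evaluation of statement sequences `⇓_seq`. -/
inductive BigSeq (D : Dialect Val Op Ext Gl) :
    List (Term Val Op Ext) → Gl → Store Val → NS Val Op Ext →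
    Term Val Op Ext → Gl → Store Val → NS Val Op Ext → Prop where
  | nilB {G L N} : BigSeq D [] G L N .regular G L N
  | consReg {s ss MM G L N G1 L1 G2 L2}
      (h1 : Big D s G L N .regular G1 L1 N)
      (h2 : BigSeq D ss G1 L1 N MM G2 L2 N) :
      BigSeq D (s :: ss) G L N MM G2 L2 N
  | consIrr {s ss MM G L N G1 L1}
      (h1 : Big D s G L N MM G1 L1 N) (h2 : IsIrregularCore MM) :
      BigSeq D (s :: ss) G L N MM G1 L1 N

/-- Big-step evaluation of expressions `⇓_exp`. -/
inductive BigExp (D : Dialect Val Op Ext Gl) :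
    Term Val Op Ext → Gl → Store Val → NS Val Op Ext →
    Term Val Op Ext → Gl → Store Val → NS Val Op Ext → Prop where
  | identB {x v G L N} (h : L x = some v) :
      BigExp D (.var x) G L N (.val v) G L N
  | valB {v G L N} : BigExp D (.val v) G L N (.val v) G L N
  | funCallB {f args vs ps rs body MM ws G L N Gn Ln G'' L''}
      (hargs : BigArgs D args G L N vs Gn Ln)
      (hN : N f = some (ps, rs, body))
      (hlen : ps.length = vs.length)
      (hbody : Big D body Gn
        (updMany (updMany emptyStore rs (rs.map fun _ => D.zero)) ps vs) N MM G'' L'' N)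
      (hret : List.Forall₂ (fun z w => L'' z = some w) rs ws) :
      BigExp D (.call f args) G L N (mkRet ws) G'' Ln N
  | opCallB {op args vs ws G L N Gn Ln G''}
      (hargs : BigArgs D args G L N vs Gn Ln)
      (h : D.opc op vs Gn (Sum.inl ws) G'') :
      BigExp D (.opcall op args) G L N (mkRet ws) G'' Ln N

/-- Right-to-left evaluation of argument lists. -/
inductive BigArgs (D : Dialect Val Op Ext Gl) :
    List (Term Val Op Ext) → Gl → Store Val → NS Val Op Ext →
    List Val → Gl → Store Val → Prop where
  | nilA {G L N} : BigArgs D [] G L N [] G L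
  | consA {M Ms v vs G L N G1 L1 G2 L2}
      (htail : BigArgs D Ms G L N vs G1 L1)
      (hhead : BigExp D M G1 L1 N (.val v) G2 L2 N) :
      BigArgs D (M :: Ms) G L N (v :: vs) G2 L2
end

/-- Source-level syntax: no runtime constructs. -/
inductive IsSource : Term Val Op Ext → Prop where
  | block {ss} (h : ∀ s ∈ ss, IsSource s) : IsSource (.block ss)
  | fundef {f ps rs body} (h : IsSource body) : IsSource (.fundef f ps rs body)
  | letdecl {xs e} (h : IsSource e) : IsSource (.letdecl xs e)
  | assign {xs e} (h : IsSource e) : IsSource (.assign xs e)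
  | ite {c b} (h1 : IsSource c) (h2 : IsSource b) : IsSource (.ite c b)
  | switch {M cs d} (h1 : IsSource M) (h2 : ∀ c ∈ cs, IsSource c.2)
      (h3 : IsSource d) : IsSource (.switch M cs d)
  | forloop {i c p b} (h1 : IsSource i) (h2 : IsSource c) (h3 : IsSource p)
      (h4 : IsSource b) : IsSource (.forloop i c p b)
  | brk : IsSource .brk
  | cont : IsSource .cont
  | leave : IsSource .leave
  | call {f args} (h : ∀ a ∈ args, IsSource a) : IsSource (.call f args)
  | opcall {op args} (h : ∀ a ∈ args, IsSource a) : IsSource (.opcall op args)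
  | var {x} : IsSource (.var x)
  | val {v} : IsSource (.val v)

/-- Syntactic restriction on halting statements: `HaltOK inLoop inFun S` says that
    every `break`/`continue` in `S` occurs inside the body of some enclosing for-loop
    (not separated from it by a function definition) and every `leave` occurs inside
    some enclosing function body; `inLoop`/`inFun` record the ambient context. -/
inductive HaltOK : Bool → Bool → Term Val Op Ext → Prop where
  | block {il fn ss} (h : ∀ s ∈ ss, HaltOK il fn s) : HaltOK il fn (.block ss)
  | fundef {il fn f ps rs body} (h : HaltOK false true body) :
      HaltOK il fn (.fundef f ps rs body)
  | letdecl {il fn xs e} (h : HaltOK il fn e) : HaltOK il fn (.letdecl xs e)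
  | assign {il fn xs e} (h : HaltOK il fn e) : HaltOK il fn (.assign xs e)
  | ite {il fn c b} (h1 : HaltOK il fn c) (h2 : HaltOK il fn b) :
      HaltOK il fn (.ite c b)
  | switch {il fn M cs d} (h1 : HaltOK il fn M) (h2 : ∀ c ∈ cs, HaltOK il fn c.2)
      (h3 : HaltOK il fn d) : HaltOK il fn (.switch M cs d)
  | forloop {il fn i c p b} (h1 : HaltOK il fn i) (h2 : HaltOK il fn c)
      (h3 : HaltOK il fn p) (h4 : HaltOK true fn b) :
      HaltOK il fn (.forloop i c p b)
  | brk {fn} : HaltOK true fn .brk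
  | cont {fn} : HaltOK true fn .cont
  | leave {il} : HaltOK il true .leave
  | call {il fn f args} (h : ∀ a ∈ args, HaltOK il fn a) : HaltOK il fn (.call f args)
  | opcall {il fn op args} (h : ∀ a ∈ args, HaltOK il fn a) :
      HaltOK il fn (.opcall op args)
  | var {il fn x} : HaltOK il fn (.var x)
  | val {il fn v} : HaltOK il fn (.val v)

/-- Frames: break-catching frames `⟦·⟧_brk` or scoped-block frames `{·}_L^N`. -/
inductive Frame (Val : Type) where
  | brkF
  | blockF (L : Store Val)

/-- Apply a list of frames (innermost first), all blocks annotated with namespace `N`. -/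
def applyFrames (N : NS Val Op Ext) :
    List (Frame Val) → Term Val Op Ext → Term Val Op Ext
  | [], t => t
  | .brkF :: fs, t => applyFrames N fs (.brkFrame t)
  | .blockF L :: fs, t => applyFrames N fs (.scopedBlock [t] L N)

/-- Ascending chain of block-frame domains, starting from `d` (innermost first). -/
def Asc (d : Set Var) : List (Frame Val) → Prop
  | [] => True
  | .brkF :: fs => Asc d fs
  | .blockF L :: fs => d ⊆ Dom L ∧ Asc (Dom L) fs

section Helpers
variable {Val Op Ext Gl : Type} {D : Dialect Val Op Ext Gl}

lemma restrict_restrict {L'' L₁ L₂ : Store Val} (h : Dom L₁ ⊆ Dom L₂) :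
    restrict (restrict L'' L₁) L₂ = restrict L'' L₁ := by
  funext x
  simp only [restrict]
  by_cases h1 : (L₁ x).isSome
  · have h2 : (L₂ x).isSome := h h1
    simp [h1, h2]
  · simp [h1]

/-- atoms (modes) can only be plugged at the hole -/
lemma plug_eq_atom {E : Ctx Val Op Ext} {S t : Term Val Op Ext}
    (ht : t = .regular ∨ t = .brk ∨ t = .cont ∨ t = .leave ∨ ∃ m, t = .ext m)
    (h : plug E S = t) : E = Ctx.hole ∧ S = t := by
  cases E <;> rcases ht with h'|h'|h'|h'|⟨m,h'⟩ <;> subst h' <;> simp_all [plug]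

lemma isMode_atom {t : Term Val Op Ext} (h : IsMode t) :
    t = .regular ∨ t = .brk ∨ t = .cont ∨ t = .leave ∨ ∃ m, t = .ext m := by
  rcases h with (h|h|h|h)|⟨m,h⟩ <;> subst h <;> simp [IsMode, IsModeCore]

lemma base_not_mode {S : Term Val Op Ext} (hS : IsMode S) {G L N S' G' L' N'} :
    ¬ Base D S G L N S' G' L' N' := by
  rcases isMode_atom hS with h|h|h|h|⟨m,h⟩ <;> subst h <;> intro hb <;> cases hb
lemma not_step_mode {MM : Term Val Op Ext} (hM : IsMode MM) {G L N c} :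
    ¬ Step D (MM, G, L, N) c := by
  intro h
  cases h with
  | ctx E S G0 L0 N0 S' G' L' N' hb =>
      obtain ⟨hE, hS⟩ := plug_eq_atom (isMode_atom hM) rfl
      subst hE
      exact base_not_mode hM hb
  | extProp E m G0 L0 N0 hne =>
      obtain ⟨hE, hS⟩ := plug_eq_atom (isMode_atom hM) rfl
      exact hne hE

lemma steps_mode_eq {MM : Term Val Op Ext} (hM : IsMode MM) {G L N c}
    (h : Steps D (MM, G, L, N) c) : c = (MM, G, L, N) := by
  rcases Relation.ReflTransGen.cases_head h with heq | ⟨b, hstep, _⟩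
  · exact heq.symm
  · exact absurd hstep (not_step_mode hM)
lemma step_scoped_inv {t : Term Val Op Ext} {L₀ : Store Val} {N₀ : NS Val Op Ext}
    {G : Gl} {L N c}
    (h : Step D (.scopedBlock [t] L₀ N₀, G, L, N) c) :
    (∃ E S S' G' L' N', t = plug E S ∧ Base D S G L N S' G' L' N' ∧
        c = (.scopedBlock [plug E S'] L₀ N₀, G', L', N')) ∨
    (t = .regular ∧ c = (.regular, G, restrict L L₀, N₀)) ∨
    (IsIrregularCore t ∧ c = (t, G, restrict L L₀, N₀)) ∨
    (∃ E m, t = plug E (.ext m) ∧ c = (.ext m, G, L, N)) := by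
  generalize hcfg : ((Term.scopedBlock [t] L₀ N₀ : Term Val Op Ext), G, L, N) = c0 at h
  cases h with
  | ctx E S G0 L0 N0 S' G' L' N' hb =>
      simp only [Prod.mk.injEq] at hcfg
      obtain ⟨hT, hG, hL, hN⟩ := hcfg
      subst hG hL hN
      cases E with
      | hole =>
          simp only [plug] at hT
          subst hT
          cases hb with
          | scopedNext ss L0' N0' G L N hne => simp at *
          | scopedExitReg L0' N0' G L N =>
              exact Or.inr (Or.inl ⟨rfl, rfl⟩)
          | scopedExitIrr m ss L0' N0' G L N hirr =>
              exact Or.inr (Or.inr (Or.inl ⟨hirr, rfl⟩))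
      | scopedC E' rest Lc Nc =>
          simp only [plug, Term.scopedBlock.injEq, List.cons.injEq] at hT
          obtain ⟨⟨ht, hrest⟩, hLc, hNc⟩ := hT
          subst hrest hLc hNc
          exact Or.inl ⟨E', S, S', G', L', N', ht, hb, rfl⟩
      | letC xs E' => simp [plug] at hT
      | assignC xs E' => simp [plug] at hT
      | cntC E' => simp [plug] at hT
      | brkC E' => simp [plug] at hT
      | iteC E' b => simp [plug] at hT
      | switchC E' cs d => simp [plug] at hT
      | callC f before E' after => simp [plug] at hT
      | opcallC op before E' after => simp [plug] at hT
      | frameC E' Lc rets => simp [plug] at hT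
  | extProp E m G0 L0 N0 hne =>
      simp only [Prod.mk.injEq] at hcfg
      obtain ⟨hT, hG, hL, hN⟩ := hcfg
      subst hG hL hN
      cases E with
      | hole => simp [plug] at hT
      | scopedC E' rest Lc Nc =>
          simp only [plug, Term.scopedBlock.injEq, List.cons.injEq] at hT
          obtain ⟨⟨ht, hrest⟩, hLc, hNc⟩ := hT
          exact Or.inr (Or.inr (Or.inr ⟨E', m, ht, rfl⟩))
      | letC xs E' => simp [plug] at hT
      | assignC xs E' => simp [plug] at hT
      | cntC E' => simp [plug] at hT
      | brkC E' => simp [plug] at hT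
      | iteC E' b => simp [plug] at hT
      | switchC E' cs d => simp [plug] at hT
      | callC f before E' after => simp [plug] at hT
      | opcallC op before E' after => simp [plug] at hT
      | frameC E' Lc rets => simp [plug] at hT
lemma irregular_atom {m : Term Val Op Ext} (h : m = Term.regular ∨ IsIrregularCore m) :
    m = .regular ∨ m = .brk ∨ m = .cont ∨ m = .leave ∨ ∃ x, m = .ext x := by
  rcases h with h | h|h|h <;> simp [h]

lemma irregular_mode {m : Term Val Op Ext} (h : m = Term.regular ∨ IsIrregularCore m) :
    IsMode m := by
  rcases h with h | h|h|h <;> subst h <;> simp [IsMode, IsModeCore]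

/-- A scoped block whose body is a completed mode runs exactly by exiting. -/
lemma scoped_mode_run {m MM : Term Val Op Ext} {L₀ : Store Val} {N₀ : NS Val Op Ext}
    {G G' : Gl} {L L' N N'}
    (hm : m = Term.regular ∨ IsIrregularCore m) (hMM : IsMode MM)
    (h : Steps D (.scopedBlock [m] L₀ N₀, G, L, N) (MM, G', L', N')) :
    MM = m ∧ G' = G ∧ L' = restrict L L₀ ∧ N' = N₀ := by
  rcases Relation.ReflTransGen.cases_head h with heq | ⟨c, hstep, hrest⟩
  · exfalso
    rcases isMode_atom hMM with h'|h'|h'|h'|⟨x,h'⟩ <;> simp [h'] at heq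
  · rcases step_scoped_inv hstep with
      ⟨E, S, S', G1, L1, N1, hT, hb, hc⟩ | ⟨hT, hc⟩ | ⟨hT, hc⟩ | ⟨E, x, hT, hc⟩
    · obtain ⟨hE, hS⟩ := plug_eq_atom (irregular_atom hm) hT.symm
      exact absurd hb (hS ▸ base_not_mode (irregular_mode hm))
    · subst hT hc
      have := steps_mode_eq (irregular_mode hm) hrest
      exact by injection this with h1 h2; injection h2 with h2 h3; injection h3 with h3 h4; exact ⟨h1, h2, h3, h4⟩
    · subst hc
      have := steps_mode_eq (irregular_mode hm) hrest
      exact by injection this with h1 h2; injection h2 with h2 h3; injection h3 with h3 h4; exact ⟨h1, h2, h3, h4⟩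
    · obtain ⟨hE, hS⟩ := plug_eq_atom (irregular_atom hm) hT.symm
      rcases hm with h' | h'|h'|h' <;> simp [h'] at hS
lemma one_frame_fwd {L₁ L₂ : Store Val} (hsub : Dom L₁ ⊆ Dom L₂)
    {N'' : NS Val Op Ext} {MM : Term Val Op Ext} {G' : Gl} {L' : Store Val}
    {N' : NS Val Op Ext} (hM : IsMode MM) :
    ∀ c, Steps D c (MM, G', L', N') →
    ∀ (S : Term Val Op Ext) (G : Gl) L N, c = (.scopedBlock [S] L₁ N'', G, L, N) →
      Steps D (.scopedBlock [.scopedBlock [S] L₁ N''] L₂ N'', G, L, N)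
        (MM, G', L', N') := by
  intro c h
  induction h using Relation.ReflTransGen.head_induction_on with
  | refl =>
      intro S G L N heq
      exfalso
      rcases isMode_atom hM with h'|h'|h'|h'|⟨x,h'⟩ <;> subst h' <;> simp at heq
  | head hstep hrest ih =>
      intro S G L N heq
      subst heq
      rcases step_scoped_inv hstep with
        ⟨E, Sb, Sb', G1, L1, N1, hT, hb, hc⟩ | ⟨hT, hc⟩ | ⟨hT, hc⟩ | ⟨E, x, hT, hc⟩
      · subst hT
        have hih := ih (plug E Sb') G1 L1 N1 hc
        refine Relation.ReflTransGen.head ?_ hih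
        have := Step.ctx (D := D)
          (Ctx.scopedC (Ctx.scopedC E [] L₁ N'') [] L₂ N'') Sb G L N Sb' G1 L1 N1 hb
        simpa [plug] using this
      · subst hT
        subst hc
        have hfin := steps_mode_eq (irregular_mode (Or.inl rfl)) hrest
        obtain ⟨h1, h2, h3, h4⟩ : MM = Term.regular ∧ G' = G ∧ L' = restrict L L₁ ∧ N' = N'' := by
          injection hfin with h1 h2; injection h2 with h2 h3; injection h3 with h3 h4
          exact ⟨h1, h2, h3, h4⟩
        have s1 : Step D (.scopedBlock [.scopedBlock [.regular] L₁ N''] L₂ N'', G, L, N)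
            (.scopedBlock [.regular] L₂ N'', G, restrict L L₁, N'') := by
          have := Step.ctx (D := D) (Ctx.scopedC Ctx.hole [] L₂ N'')
            (.scopedBlock [.regular] L₁ N'') G L N .regular G (restrict L L₁) N''
            (Base.scopedExitReg L₁ N'' G L N)
          simpa [plug] using this
        have s2 : Step D (.scopedBlock [.regular] L₂ N'', G, restrict L L₁, N'')
            (.regular, G, restrict (restrict L L₁) L₂, N'') := by
          have := Step.ctx (D := D) Ctx.hole
            (.scopedBlock [.regular] L₂ N'') G (restrict L L₁) N'' .regular G
            (restrict (restrict L L₁) L₂) N''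
            (Base.scopedExitReg L₂ N'' G (restrict L L₁) N'')
          simpa [plug] using this
        rw [restrict_restrict hsub] at s2
        rw [h1, h2, h3, h4]
        exact Relation.ReflTransGen.head s1
          (Relation.ReflTransGen.head s2 Relation.ReflTransGen.refl)
      · subst hc
        have hfin := steps_mode_eq (irregular_mode (Or.inr hT)) hrest
        obtain ⟨h1, h2, h3, h4⟩ : MM = S ∧ G' = G ∧ L' = restrict L L₁ ∧ N' = N'' := by
          injection hfin with h1 h2; injection h2 with h2 h3; injection h3 with h3 h4
          exact ⟨h1, h2, h3, h4⟩
        have s1 : Step D (.scopedBlock [.scopedBlock [S] L₁ N''] L₂ N'', G, L, N)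
            (.scopedBlock [S] L₂ N'', G, restrict L L₁, N'') := by
          have := Step.ctx (D := D) (Ctx.scopedC Ctx.hole [] L₂ N'')
            (.scopedBlock [S] L₁ N'') G L N S G (restrict L L₁) N''
            (Base.scopedExitIrr S [] L₁ N'' G L N hT)
          simpa [plug] using this
        have s2 : Step D (.scopedBlock [S] L₂ N'', G, restrict L L₁, N'')
            (S, G, restrict (restrict L L₁) L₂, N'') := by
          have := Step.ctx (D := D) Ctx.hole
            (.scopedBlock [S] L₂ N'') G (restrict L L₁) N'' S G
            (restrict (restrict L L₁) L₂) N''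
            (Base.scopedExitIrr S [] L₂ N'' G (restrict L L₁) N'' hT)
          simpa [plug] using this
        rw [restrict_restrict hsub] at s2
        rw [h1, h2, h3, h4]
        exact Relation.ReflTransGen.head s1
          (Relation.ReflTransGen.head s2 Relation.ReflTransGen.refl)
      · subst hT hc
        have hfin := steps_mode_eq (Or.inr ⟨x, rfl⟩) hrest
        obtain ⟨h1, h2, h3, h4⟩ : MM = Term.ext x ∧ G' = G ∧ L' = L ∧ N' = N := by
          injection hfin with h1 h2; injection h2 with h2 h3; injection h3 with h3 h4
          exact ⟨h1, h2, h3, h4⟩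
        have s1 : Step D
            (.scopedBlock [.scopedBlock [plug E (.ext x)] L₁ N''] L₂ N'', G, L, N)
            (.ext x, G, L, N) := by
          have := Step.extProp (D := D)
            (Ctx.scopedC (Ctx.scopedC E [] L₁ N'') [] L₂ N'') x G L N (by simp)
          simpa [plug] using this
        rw [h1, h2, h3, h4]
        exact Relation.ReflTransGen.head s1 Relation.ReflTransGen.refl
lemma one_frame_bwd {L₁ L₂ : Store Val} (hsub : Dom L₁ ⊆ Dom L₂)
    {N'' : NS Val Op Ext} {MM : Term Val Op Ext} {G' : Gl} {L' : Store Val}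
    {N' : NS Val Op Ext} (hM : IsMode MM) :
    ∀ c, Steps D c (MM, G', L', N') →
    ∀ (S : Term Val Op Ext) (G : Gl) L N,
      c = (.scopedBlock [.scopedBlock [S] L₁ N''] L₂ N'', G, L, N) →
      Steps D (.scopedBlock [S] L₁ N'', G, L, N) (MM, G', L', N') := by
  intro c h
  induction h using Relation.ReflTransGen.head_induction_on with
  | refl =>
      intro S G L N heq
      exfalso
      rcases isMode_atom hM with h'|h'|h'|h'|⟨x,h'⟩ <;> subst h' <;> simp at heq
  | @head cfga cfgb hstep hrest ih =>
      intro S G L N heq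
      subst heq
      rcases step_scoped_inv hstep with
        ⟨E, Sb, Sb', G1, L1, N1, hT, hb, hc⟩ | ⟨hT, hc⟩ | ⟨hT, hc⟩ | ⟨E, x, hT, hc⟩
      · cases E with
        | hole =>
            simp only [plug] at hT hc
            subst hT
            cases hb with
            | scopedNext ss L0' N0' G2 L2' N2 hne => exact absurd rfl hne
            | scopedExitReg L0' N0' G2 L2' N2 =>
                subst hc
                obtain ⟨h1, h2, h3, h4⟩ := scoped_mode_run (Or.inl rfl) hM hrest
                rw [restrict_restrict hsub] at h3
                rw [h1, h2, h3, h4]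
                refine Relation.ReflTransGen.head ?_ Relation.ReflTransGen.refl
                have := Step.ctx (D := D) Ctx.hole (.scopedBlock [.regular] L₁ N'')
                  G L N .regular G (restrict L L₁) N'' (Base.scopedExitReg L₁ N'' G L N)
                simpa [plug] using this
            | scopedExitIrr m ss L0' N0' G2 L2' N2 hirr =>
                subst hc
                obtain ⟨h1, h2, h3, h4⟩ := scoped_mode_run (Or.inr hirr) hM hrest
                rw [restrict_restrict hsub] at h3
                rw [h1, h2, h3, h4]
                refine Relation.ReflTransGen.head ?_ Relation.ReflTransGen.refl
                have := Step.ctx (D := D) Ctx.hole (.scopedBlock [S] L₁ N'')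
                  G L N S G (restrict L L₁) N'' (Base.scopedExitIrr S [] L₁ N'' G L N hirr)
                simpa [plug] using this
        | scopedC E' rest Lc Nc =>
            simp only [plug, Term.scopedBlock.injEq, List.cons.injEq] at hT
            obtain ⟨⟨hS, hrest'⟩, hLc, hNc⟩ := hT
            subst hS hrest' hLc hNc
            have hc' : cfgb = (.scopedBlock [.scopedBlock [plug E' Sb'] L₁ N''] L₂ N'', G1, L1, N1) := by
              simpa [plug] using hc
            have hih := ih (plug E' Sb') G1 L1 N1 hc'
            refine Relation.ReflTransGen.head ?_ hih
            have := Step.ctx (D := D) (Ctx.scopedC E' [] L₁ N'') Sb G L N Sb' G1 L1 N1 hb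
            simpa [plug] using this
        | letC xs E' => simp [plug] at hT
        | assignC xs E' => simp [plug] at hT
        | cntC E' => simp [plug] at hT
        | brkC E' => simp [plug] at hT
        | iteC E' b => simp [plug] at hT
        | switchC E' cs d => simp [plug] at hT
        | callC f before E' after => simp [plug] at hT
        | opcallC op before E' after => simp [plug] at hT
        | frameC E' Lc rets => simp [plug] at hT
      · simp at hT
      · rcases hT with h'|h'|h' <;> simp [IsIrregularCore] at h'
      · cases E with
        | hole => simp [plug] at hT
        | scopedC E' rest Lc Nc =>
            simp only [plug, Term.scopedBlock.injEq, List.cons.injEq] at hT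
            obtain ⟨⟨hS, hrest'⟩, hLc, hNc⟩ := hT
            subst hc
            have hfin := steps_mode_eq (Or.inr ⟨x, rfl⟩) hrest
            obtain ⟨h1, h2, h3, h4⟩ : MM = Term.ext x ∧ G' = G ∧ L' = L ∧ N' = N := by
              injection hfin with h1 h2; injection h2 with h2 h3; injection h3 with h3 h4
              exact ⟨h1, h2, h3, h4⟩
            rw [h1, h2, h3, h4, hS]
            refine Relation.ReflTransGen.head ?_ Relation.ReflTransGen.refl
            have := Step.extProp (D := D) (Ctx.scopedC E' [] L₁ N'') x G L N (by simp)
            simpa [plug] using this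
        | letC xs E' => simp [plug] at hT
        | assignC xs E' => simp [plug] at hT
        | cntC E' => simp [plug] at hT
        | brkC E' => simp [plug] at hT
        | iteC E' b => simp [plug] at hT
        | switchC E' cs d => simp [plug] at hT
        | callC f before E' after => simp [plug] at hT
        | opcallC op before E' after => simp [plug] at hT
        | frameC E' Lc rets => simp [plug] at hT
lemma one_frame {L₁ L₂ : Store Val} (hsub : Dom L₁ ⊆ Dom L₂)
    {N'' : NS Val Op Ext} {S MM : Term Val Op Ext} {G G' : Gl} {L L' : Store Val}
    {N N' : NS Val Op Ext} (hM : IsMode MM) :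
    Steps D (.scopedBlock [S] L₁ N'', G, L, N) (MM, G', L', N') ↔
      Steps D (.scopedBlock [.scopedBlock [S] L₁ N''] L₂ N'', G, L, N)
        (MM, G', L', N') :=
  ⟨fun h => one_frame_fwd hsub hM _ h S G L N rfl,
   fun h => one_frame_bwd hsub hM _ h S G L N rfl⟩

end Helpers

/-- Redundant frames (case without break frames): a nesting of
    scoped-block frames with ascending domains around a block frame can be
    collapsed to the single block frame. -/
theorem redundant_frames_no_break {Val Op Ext Gl : Type} (D : Dialect Val Op Ext Gl)
    (fs : List (Frame Val)) (N'' : NS Val Op Ext)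
    {S MM : Term Val Op Ext} {G G' : Gl} {L L' L₁ : Store Val}
    {N N' : NS Val Op Ext}
    (hnb : ∀ f ∈ fs, f ≠ Frame.brkF)
    (hasc : Asc (Dom L₁) fs) (hM : IsMode MM) :
    Steps D (Term.scopedBlock [S] L₁ N'', G, L, N) (MM, G', L', N') ↔
      Steps D (applyFrames N'' fs (Term.scopedBlock [S] L₁ N''), G, L, N)
        (MM, G', L', N') := by
  induction fs generalizing S L₁ with
  | nil => simp [applyFrames]
  | cons f fs' ih =>
      cases f with
      | brkF => exact absurd rfl (hnb _ (by simp))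
      | blockF L₂ =>
          obtain ⟨hsub, hasc'⟩ := hasc
          have hnb' : ∀ f ∈ fs', f ≠ Frame.brkF := fun f hf => hnb f (by simp [hf])
          have h2 := ih (S := Term.scopedBlock [S] L₁ N'') (L₁ := L₂) hnb' hasc'
          exact (one_frame hsub hM).trans h2

end Yul
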